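/- If X₁ or X₂ is a one-particle irreducible graph, then α_{2,2}(X₁ ⊗ X₂) = 0. -/

import Mathlib

/-!
Common definitions for the graph complex of Kontsevich / Conant–Vogtmann,
following W.L. Gan, "On a theorem of Conant-Vogtmann".

A graph is modelled by `PreGraph`: a finite set of vertices `V`, a finite set of
edges `E`, where the two half-edges of an edge `e` are `(e, true)` and `(e, false)`,
attached to the vertices `endp (e, b)`.  An orientation is built in: the ordering of
the vertices is the list `ord`, and each edge `e` is directed from the half-edge
`(e, true)` (its source) to `(e, false)` (its target).
-/

noncomputable section

open scoped TensorProduct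

attribute [local instance] Classical.propDecidable

namespace GraphComplex

/-- A finite directed multigraph with ordered vertices (an "oriented graph"
in the sense of Conant–Vogtmann: an ordering of vertices together with a
direction on each edge). -/
structure PreGraph : Type 1 where
  V : Type
  E : Type
  [fintV : Fintype V]
  [decV : DecidableEq V]
  [fintE : Fintype E]
  [decE : DecidableEq E]
  /-- the ordering (labelling by `1, 2, …`) of the vertices -/
  ord : List V
  /-- `endp (e, true)` is the source of the edge `e`, `endp (e, false)` its target;
  `(e, true)` and `(e, false)` are the two half-edges of `e`. -/
  endp : E × Bool → V

attribute [instance] PreGraph.fintV PreGraph.decV PreGraph.fintE PreGraph.decE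

namespace PreGraph

/-- The valency of a vertex: the number of half-edges attached to it. -/
def degree (G : PreGraph) (x : G.V) : ℕ :=
  (Finset.univ.filter fun h : G.E × Bool => G.endp h = x).card

/-- A `PreGraph` is an honest (oriented) graph if `ord` is an ordering of all its
vertices and every vertex has valency at least 3. -/
def Valid (G : PreGraph) : Prop :=
  G.ord.Nodup ∧ (∀ x : G.V, x ∈ G.ord) ∧ ∀ x : G.V, 3 ≤ G.degree x

/-- Two vertices are adjacent if some edge has them as its two endpoints. -/
def Adj (G : PreGraph) (x y : G.V) : Prop :=
  ∃ (e : G.E) (b : Bool), G.endp (e, b) = x ∧ G.endp (e, !b) = y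

/-- Two vertices are in the same connected component. -/
def Reach (G : PreGraph) : G.V → G.V → Prop := Relation.ReflTransGen G.Adj

/-- Connectedness (as a CW-complex; in particular nonempty). -/
def IsConnected (G : PreGraph) : Prop := Nonempty G.V ∧ ∀ x y : G.V, G.Reach x y

end PreGraph

/-- An (oriented) graph: all vertices have valency at least `3`. -/
def GraphObj := {G : PreGraph // G.Valid}

/-! ### Signs of reorderings -/

/-- All ordered pairs `(a, b)` where `a` occurs strictly before `b` in the list. -/
def ordPairs {α : Type*} : List α → List (α × α)
  | [] => []
  | a :: l => (l.map fun b => (a, b)) ++ ordPairs l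

/-- The sign of the permutation taking the ordering `l₁` to the ordering `l₂`
(of the same finite set), i.e. `(-1)` to the number of inversions. -/
def permSign {α : Type*} [DecidableEq α] (l₁ l₂ : List α) : ℤ :=
  (-1) ^ ((ordPairs l₁).filter fun p => l₂.idxOf p.2 < l₂.idxOf p.1).length

/-! ### Elementary orientation changes and isomorphisms -/

/-- Reverse the direction of the edge `e`. -/
def flipEdge (G : PreGraph) (e : G.E) : PreGraph :=
  { G with endp := fun h => if h.1 = e then G.endp (h.1, !h.2) else G.endp h }

/-- Switch the order (labels) of the two vertices `a` and `b`. -/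
def swapOrd (G : PreGraph) (a b : G.V) : PreGraph :=
  { G with ord := G.ord.map fun x => if x = a then b else if x = b then a else x }

/-- An isomorphism of oriented graphs (preserving vertex ordering and
edge directions). -/
structure GIso (G G' : PreGraph) where
  eV : G.V ≃ G'.V
  eE : G.E ≃ G'.E
  endp_eq : ∀ (e : G.E) (b : Bool), G'.endp (eE e, b) = eV (G.endp (e, b))
  ord_eq : G'.ord = G.ord.map eV

variable (k : Type*) [Field k] [CharZero k]

/-- The free `k`-vector space on oriented graphs. -/
abbrev FreeG := GraphObj →₀ k

/-- The basis vector of a pregraph (zero if it is not a valid graph; all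
constructions used below preserve validity, so this never matters). -/
def mkFree (G : PreGraph) : FreeG k :=
  if h : G.Valid then Finsupp.single ⟨G, h⟩ 1 else 0

/-- The relations defining the graph complex: `(X, -ω) = -(X, ω)` where `-ω` is
obtained by reversing one edge direction or switching the order of two vertices,
and isomorphic oriented graphs are identified. -/
def relSet : Set (FreeG k) :=
  {x | (∃ (G : GraphObj) (e : G.1.E),
          x = Finsupp.single G 1 + mkFree k (flipEdge G.1 e)) ∨
       (∃ (G : GraphObj) (a b : G.1.V), a ≠ b ∧
          x = Finsupp.single G 1 + mkFree k (swapOrd G.1 a b)) ∨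
       (∃ (G G' : GraphObj), Nonempty (GIso G.1 G'.1) ∧
          x = Finsupp.single G 1 - Finsupp.single G' 1)}

def relMod : Submodule k (FreeG k) := Submodule.span k (relSet k)

/-- The graph complex `𝔊`: the `k`-vector space spanned by oriented graphs
modulo `(X, -ω) = -(X, ω)`. -/
abbrev GC := FreeG k ⧸ relMod k

/-- The class of an oriented graph in the graph complex. -/
def cls (G : PreGraph) : GC k := Submodule.Quotient.mk (mkFree k G)

/-! ### Disjoint unions -/

/-- The product `X ⬝ Y` of two oriented graphs: disjoint union, the labels of the
vertices of `Y` being shifted by the number of vertices of `X`. -/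
def prodG (X Y : PreGraph) : PreGraph where
  V := X.V ⊕ Y.V
  E := X.E ⊕ Y.E
  ord := X.ord.map Sum.inl ++ Y.ord.map Sum.inr
  endp h :=
    match h with
    | (Sum.inl e, b) => Sum.inl (X.endp (e, b))
    | (Sum.inr e, b) => Sum.inr (Y.endp (e, b))

/-- The product `X₁ ⬝ X₂ ⬝ ⋯ ⬝ Xₙ` of a tuple of oriented graphs. -/
def nProd {n : ℕ} (X : Fin n → PreGraph) : PreGraph where
  V := Σ i, (X i).V
  E := Σ i, (X i).E
  ord := (List.finRange n).flatMap fun i => ((X i).ord).map fun v => ⟨i, v⟩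
  endp h := ⟨h.1.1, (X h.1.1).endp (h.1.2, h.2)⟩

/-! ### Edge contraction and surgery -/

/-- The graph `X_e`, obtained by contracting the (non-loop) edge `e`: the target
of `e` is merged into its source, and, following Conant--Vogtmann's convention,
the merged vertex is labelled first, the remaining vertices keeping their
relative order. -/
def contractGraph (G : PreGraph) (e : G.E)
    (hst : G.endp (e, true) ≠ G.endp (e, false)) : PreGraph where
  V := {x : G.V // x ≠ G.endp (e, false)}
  E := {e' : G.E // e' ≠ e}
  ord := ⟨G.endp (e, true), hst⟩ ::
    ((G.ord.filter fun x =>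
        decide (x ≠ G.endp (e, true) ∧ x ≠ G.endp (e, false))).filterMap
      fun x => if hx : x ≠ G.endp (e, false) then some ⟨x, hx⟩ else none)
  endp h :=
    if hy : G.endp (h.1.1, h.2) = G.endp (e, false) then ⟨G.endp (e, true), hst⟩
    else ⟨G.endp (h.1.1, h.2), hy⟩

/-- The sign relating the orientation of `G` to its representative in which the
source of `e` is labelled `1` and the target of `e` is labelled `2`. -/
def contractSign (G : PreGraph) (e : G.E) : ℤ :=
  permSign G.ord (G.endp (e, true) :: G.endp (e, false) ::
    (G.ord.filter fun x =>
      decide (x ≠ G.endp (e, true) ∧ x ≠ G.endp (e, false))))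

/-- The class of `X_e` in the graph complex (zero if `e` is an edge-loop). -/
def contractCls (G : PreGraph) (e : G.E) : GC k :=
  if hst : G.endp (e, true) = G.endp (e, false) then 0
  else contractSign G e • cls k (contractGraph G e hst)

/-- `X⟨h₁, h₂⟩`: replace the edges `e(h₁)`, `e(h₂)` by an edge `e₁` (in the slot of
`e(h₁)`) directed from `v(h₁)` to `v(h̄₂)` and an edge `e₂` (in the slot of `e(h₂)`)
directed from `v(h₂)` to `v(h̄₁)`. -/
def surg (G : PreGraph) (h₁ h₂ : G.E × Bool) : PreGraph :=
  { G with endp := fun p =>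
      if p.1 = h₁.1 then (if p.2 then G.endp h₁ else G.endp (h₂.1, !h₂.2))
      else if p.1 = h₂.1 then (if p.2 then G.endp h₂ else G.endp (h₁.1, !h₁.2))
      else G.endp p }

/-- The sign relating the orientation of `G` to its representative in which `h₁`
and `h₂` are the source half-edges of their edges. -/
def flipSign (b₁ b₂ : Bool) : ℤ :=
  (if b₁ then 1 else -1) * (if b₂ then 1 else -1)

/-- The sign accumulated in forming `X_{h₁,h₂} = X⟨h₁,h₂⟩_{e₁}`. -/
def xhhSign (G : PreGraph) (h₁ h₂ : G.E × Bool) : ℤ :=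
  flipSign h₁.2 h₂.2 * contractSign (surg G h₁ h₂) h₁.1

/-- The class of `X_{h₁,h₂} = X⟨h₁,h₂⟩_{e₁}` in the graph complex; it is zero if
`h₁, h₂` lie on a common edge or if `e(h₁)` or `e(h₂)` is an edge-loop. -/
def xhhCls (G : PreGraph) (h₁ h₂ : G.E × Bool) : GC k :=
  if h₁.1 = h₂.1 ∨ G.endp (h₁.1, true) = G.endp (h₁.1, false)
      ∨ G.endp (h₂.1, true) = G.endp (h₂.1, false) then 0
  else flipSign h₁.2 h₂.2 • contractCls k (surg G h₁ h₂) h₁.1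

/-! ### Induced subgraphs, decompositions into products -/

/-- The subgraph induced on a set of vertices which is a union of connected
components. -/
def induced (G : PreGraph) (p : G.V → Prop) : PreGraph where
  V := {x // p x}
  E := {e : G.E // p (G.endp (e, true))}
  ord := G.ord.filterMap fun x => if hx : p x then some ⟨x, hx⟩ else none
  endp h :=
    if hy : p (G.endp (h.1.1, h.2)) then ⟨G.endp (h.1.1, h.2), hy⟩
    else ⟨G.endp (h.1.1, true), h.1.2⟩

/-- The free `k`-vector space on `j`-tuples of graphs (mapping onto `𝔊^{⊗j}`). -/
abbrev FreeT (j : ℕ) := (Fin j → GraphObj) →₀ k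

/-- Basis vector of a tuple of pregraphs (zero if one of them is invalid). -/
def mkFreeT {j : ℕ} (Y : Fin j → PreGraph) : FreeT k j :=
  if h : ∀ i, (Y i).Valid then Finsupp.single (fun i => ⟨Y i, h i⟩) 1 else 0

/-- The sum over all ways of writing `Z = Y₁ ⋯ Y_a` as an (ordered) product of `a`
graphs such that each `Yᵢ` contains `w₁` or `w₂`; each decomposition is weighted by
the sign relating the ordering of `Z` to the product ordering of `Y₁ ⋯ Y_a`. -/
def decompSum (a : ℕ) (Z : PreGraph) (w₁ w₂ : Z.V) : FreeT k a :=
  ∑ c : Z.V → Fin a,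
    if (∀ x y, Z.Reach x y → c x = c y) ∧ (∀ i, c w₁ = i ∨ c w₂ = i) then
      (permSign Z.ord
        ((List.finRange a).flatMap fun i => Z.ord.filter fun x => decide (c x = i))) •
        mkFreeT k fun i => induced Z fun x => c x = i
    else 0

/-- The contribution of an ordered pair of half-edges `(h₁, h₂)` to `α_{a,·}`:
the sum over all decompositions `Y₁ ⊗ ⋯ ⊗ Y_a` of `X_{h₁,h₂}` such that each `Yᵢ`
contains `v(h'_j)` for some `j`.  It is zero unless `h₁, h₂` lie on distinct
edges, neither of which is an edge-loop. -/
def xhhDecomp (a : ℕ) (G : PreGraph) (h₁ h₂ : G.E × Bool) : FreeT k a :=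
  if hc : h₁.1 ≠ h₂.1 ∧ G.endp (h₁.1, true) ≠ G.endp (h₁.1, false)
      ∧ G.endp (h₂.1, true) ≠ G.endp (h₂.1, false)
      ∧ (surg G h₁ h₂).endp (h₁.1, true) ≠ (surg G h₁ h₂).endp (h₁.1, false) then
    (flipSign h₁.2 h₂.2 * contractSign (surg G h₁ h₂) h₁.1) •
      decompSum k a (contractGraph (surg G h₁ h₂) h₁.1 hc.2.2.2)
        ⟨(surg G h₁ h₂).endp (h₁.1, true), hc.2.2.2⟩
        ((contractGraph (surg G h₁ h₂) h₁.1 hc.2.2.2).endp (⟨h₂.1, Ne.symm hc.1⟩, true))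
  else 0

/-! ### The maps `α_{m,n}` -/

/-- `α_{a,b}` on a basis tuple `X₁ ⊗ ⋯ ⊗ X_b` (for `a, b ≤ 2`): sum over all
ordered pairs of half-edges of `X₁ ⋯ X_b` on distinct edges such that each `Xᵢ`
contains one of them, and over all decompositions of `(X₁ ⋯ X_b)_{h₁,h₂}` into `a`
factors, each containing `v(h'₁)` or `v(h'₂)`. -/
def Acore (a : ℕ) {b : ℕ} (X : Fin b → GraphObj) : FreeT k a :=
  ∑ h₁ : (nProd fun i => (X i).1).E × Bool, ∑ h₂ : (nProd fun i => (X i).1).E × Bool,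
    if ∀ i : Fin b, h₁.1.1 = i ∨ h₂.1.1 = i then
      xhhDecomp k a (nProd fun i => (X i).1) h₁ h₂
    else 0

/-- The (free-module level) map `α_{a,b} : 𝔊^{⊗b} → 𝔊^{⊗a}`; it is the zero map
when `a > 2` or `b > 2`. -/
def Afull (a b : ℕ) : FreeT k b →ₗ[k] FreeT k a :=
  if a ≤ 2 ∧ b ≤ 2 then Finsupp.lift (FreeT k a) k (Fin b → GraphObj) (Acore k a) else 0

/-! ### Projections to tensor powers of `𝔊` -/

/-- The projection onto the `m`-th tensor power of the graph complex. -/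
def qT (m : ℕ) : FreeT k m →ₗ[k] PiTensorProduct k (fun _ : Fin m => GC k) :=
  Finsupp.lift _ k _ fun X => PiTensorProduct.tprod k fun i => cls k (X i).1

def q1 : FreeT k 1 →ₗ[k] GC k :=
  Finsupp.lift _ k _ fun X => cls k (X 0).1

def q2 : FreeT k 2 →ₗ[k] (GC k ⊗[k] GC k) :=
  Finsupp.lift _ k _ fun X => cls k (X 0).1 ⊗ₜ[k] cls k (X 1).1

def q3 : FreeT k 3 →ₗ[k] (GC k ⊗[k] (GC k ⊗[k] GC k)) :=
  Finsupp.lift _ k _ fun X => cls k (X 0).1 ⊗ₜ[k] (cls k (X 1).1 ⊗ₜ[k] cls k (X 2).1)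

/-! ### Koszul signs -/

/-- The parity of a graph as an element of `Π𝔊` (number of vertices plus one). -/
def pp (X : GraphObj) : ℕ := Fintype.card X.1.V + 1

/-- Concatenation of tuples, i.e. the canonical map `𝔊^{⊗a} ⊗ 𝔊^{⊗b} → 𝔊^{⊗(a+b)}`
at the free-module level. -/
def concatF {a b : ℕ} : FreeT k a →ₗ[k] FreeT k b →ₗ[k] FreeT k (a + b) :=
  Finsupp.lift _ k _ fun Y =>
    Finsupp.lmapDomain k k fun Z => Fin.append Y Z

/-- The Koszul sign of permuting a tuple of elements of `Π𝔊` by `σ` (entry `i`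
moves to position `σ i`). -/
def koszulSign {j : ℕ} (σ : Equiv.Perm (Fin j)) (X : Fin j → GraphObj) : k :=
  (-1) ^ ∑ p ∈ Finset.univ.filter
      (fun p : Fin j × Fin j => p.1 < p.2 ∧ σ p.2 < σ p.1),
    pp (X p.1) * pp (X p.2)

/-- The Koszul-signed action of a permutation `σ` on `(Π𝔊)^{⊗j}`
(at the free-module level). -/
def Pperm {j : ℕ} (σ : Equiv.Perm (Fin j)) : FreeT k j →ₗ[k] FreeT k j :=
  Finsupp.lift _ k _ fun X => koszulSign k σ X • Finsupp.single (X ∘ σ.symm) 1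

/-! ### Flowcharts and the compositions `∘_T` -/

/-- A flowchart `T ∈ T(m,n)`: two corollas `s(T)`, `t(T)`, an outgoing half-edge of
`s(T)` joined to an incoming half-edge of `t(T)`, with `n` labelled inputs and `m`
labelled outputs.  It is determined by the set `sIn` of (labels of) inputs going
into `s(T)` and the set `tOut` of outputs coming out of `t(T)`; each corolla must
have at least one input and one output, i.e. `sIn` and `tOut` are nonempty (the
other corolla requirements hold automatically). -/
structure Flowchart (m n : ℕ) where
  sIn : Finset (Fin n)
  tOut : Finset (Fin m)
  sIn_nonempty : sIn.Nonempty
  tOut_nonempty : tOut.Nonempty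

instance instFlowchartFintype (m n : ℕ) : Fintype (Flowchart m n) :=
  Fintype.ofEquiv {p : Finset (Fin n) × Finset (Fin m) // p.1.Nonempty ∧ p.2.Nonempty}
    { toFun := fun p => ⟨p.1.1, p.1.2, p.2.1, p.2.2⟩
      invFun := fun T => ⟨(T.sIn, T.tOut), T.sIn_nonempty, T.tOut_nonempty⟩
      left_inv := fun p => rfl
      right_inv := fun T => rfl }

/-- The number of inputs of the source corolla `s(T)`. -/
def Flowchart.iS {m n : ℕ} (T : Flowchart m n) : ℕ := T.sIn.card
/-- The number of outputs of the source corolla `s(T)`. -/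
def Flowchart.oS {m n : ℕ} (T : Flowchart m n) : ℕ := T.tOutᶜ.card + 1
/-- The number of inputs of the target corolla `t(T)`. -/
def Flowchart.iT {m n : ℕ} (T : Flowchart m n) : ℕ := T.sInᶜ.card + 1
/-- The number of outputs of the target corolla `t(T)`. -/
def Flowchart.oT {m n : ℕ} (T : Flowchart m n) : ℕ := T.tOut.card

/-- The composition `α_{o(t(T)), i(t(T))} ∘_T α_{o(s(T)), i(s(T))}` along the
flowchart `T`, on a basis tuple, with Koszul signs coming from the maps being odd:
the inputs in `sIn` are moved (with Koszul sign) to the front and fed to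
`α_{o(s),i(s)}`; the last output of `s(T)` together with the remaining inputs is
fed to `α_{o(t),i(t)}` (with the Koszul sign of the odd map passing the free
outputs of `s(T)`); finally the outputs of `t(T)` are placed (with Koszul sign) at
the positions labelled by `tOut`, the free outputs of `s(T)` at the remaining
positions, preserving relative order. -/
def compositeT {m n : ℕ} (T : Flowchart m n) (X : Fin n → GraphObj) : FreeT k m :=
  ((-1 : k) ^ ∑ p ∈ Finset.univ.filter
      (fun p : Fin n × Fin n => p.1 ∉ T.sIn ∧ p.2 ∈ T.sIn ∧ p.1 < p.2),
      pp (X p.1) * pp (X p.2)) •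
  (Afull k (T.tOutᶜ.card + 1) T.sIn.card
      (Finsupp.single (fun i => X (T.sIn.orderIsoOfFin rfl i).1) 1)).sum fun Y cY =>
    (cY * (-1 : k) ^ ∑ i : Fin T.tOutᶜ.card, pp (Y i.castSucc)) •
      (Afull k T.tOut.card (T.sInᶜ.card + 1)
          (Finsupp.single
            (Fin.cons (Y (Fin.last T.tOutᶜ.card))
              fun i => X (T.sInᶜ.orderIsoOfFin rfl i).1) 1)).sum fun Z cZ =>
        (cZ * (-1 : k) ^ ∑ p ∈ Finset.univ.filter
            (fun p : Fin T.tOutᶜ.card × Fin T.tOut.card =>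
              (T.tOut.orderIsoOfFin rfl p.2).1 < (T.tOutᶜ.orderIsoOfFin rfl p.1).1),
            pp (Y p.1.castSucc) * pp (Z p.2)) •
          Finsupp.single
            (fun l : Fin m =>
              if hl : l ∈ T.tOut then Z ((T.tOut.orderIsoOfFin rfl).symm ⟨l, hl⟩)
              else Y (Fin.castSucc
                ((T.tOutᶜ.orderIsoOfFin rfl).symm ⟨l, Finset.mem_compl.mpr hl⟩))) 1

/-- The composition `α_{o(t(T)), i(t(T))} ∘_T α_{o(s(T)), i(s(T))}` along the
flowchart `T`, as a linear map (at the free-module level). -/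
def compT {m n : ℕ} (T : Flowchart m n) : FreeT k n →ₗ[k] FreeT k m :=
  Finsupp.lift _ k _ (compositeT k T)

/-! ### One-particle irreducible graphs -/

/-- Removal of an (open) edge. -/
def deleteEdge (G : PreGraph) (e : G.E) : PreGraph where
  V := G.V
  E := {e' : G.E // e' ≠ e}
  ord := G.ord
  endp h := G.endp (h.1.1, h.2)

/-- A graph is one-particle irreducible if it is connected and remains connected
after the removal of any edge. -/
def Is1PI (G : PreGraph) : Prop :=
  G.IsConnected ∧ ∀ e : G.E, (deleteEdge G e).IsConnected

/-- The subspace `𝔊^{1PI} ⊆ 𝔊` spanned by one-particle irreducible graphs. -/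
def spanIPI : Submodule k (GC k) :=
  Submodule.span k {x | ∃ G : GraphObj, Is1PI G.1 ∧ x = cls k G.1}

end GraphComplex

end

namespace GraphComplex

/-!
When `X₁ ⬝ X₂` has a pair of half-edges `h₁, h₂` on edges in different factors,
one of them, say `hᵢ`, lies in the 1PI factor, so `v(hᵢ)` and `v(h̄ᵢ)` stay connected after
`e(h₁)` and `e(h₂)` are removed. The new edges `e₁ : v(h₁) → v(h̄₂)` and `e₂ : v(h₂) → v(h̄₁)`
then join `v(h₁)` and `v(h₂)`, and contracting `e₁` keeps them connected. So `v(h'₁)` and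
`v(h'₂)` lie in one connected component of `X_{h₁,h₂}`, and no decomposition `Y₁ ⬝ Y₂` puts
them into different factors.
-/

namespace PreGraph

theorem Adj.symm {G : PreGraph} {x y : G.V} (h : G.Adj x y) : G.Adj y x := by
  obtain ⟨e, b, hx, hy⟩ := h
  exact ⟨e, !b, hy, by simpa using hx⟩

instance (G : PreGraph) : Std.Symm G.Adj := ⟨fun _ _ => Adj.symm⟩

theorem Reach.symm {G : PreGraph} {x y : G.V} (h : G.Reach x y) : G.Reach y x :=
  Relation.ReflTransGen.stdSymm.symm _ _ h

end PreGraph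

theorem decompSum_eq_zero_of_reach (k : Type*) [Field k] [CharZero k] {a : ℕ} (ha : 2 ≤ a)
    (Z : PreGraph) {w₁ w₂ : Z.V} (h : Z.Reach w₁ w₂) :
    decompSum k a Z w₁ w₂ = 0 := by
  refine Finset.sum_eq_zero fun c _ => if_neg ?_
  rintro ⟨hc, hcover⟩
  obtain ⟨i, j, hij⟩ := (Fin.nontrivial_iff_two_le.mpr ha).exists_pair_ne
  have hall : ∀ l, c w₁ = l := fun l => (hcover l).elim id ((hc _ _ h).trans)
  exact hij ((hall i).symm.trans (hall j))

section Contraction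

variable (S : PreGraph) (e : S.E) (hst : S.endp (e, true) ≠ S.endp (e, false))

def contractMap (x : S.V) : (contractGraph S e hst).V :=
  if hx : x = S.endp (e, false) then ⟨S.endp (e, true), hst⟩ else ⟨x, hx⟩

theorem contractGraph_endp (e' : S.E) (he' : e' ≠ e) (b : Bool) :
    (contractGraph S e hst).endp (⟨e', he'⟩, b) = contractMap S e hst (S.endp (e', b)) :=
  rfl

theorem contractMap_source :
    contractMap S e hst (S.endp (e, true)) = ⟨S.endp (e, true), hst⟩ :=
  dif_neg hst

theorem contractMap_target :
    contractMap S e hst (S.endp (e, false)) = ⟨S.endp (e, true), hst⟩ :=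
  dif_pos rfl

theorem contractMap_adj_or_eq {x y : S.V} (h : S.Adj x y) :
    (contractGraph S e hst).Adj (contractMap S e hst x) (contractMap S e hst y) ∨
      contractMap S e hst x = contractMap S e hst y := by
  obtain ⟨e', b, rfl, rfl⟩ := h
  by_cases he' : e' = e
  · subst e'
    right
    cases b
    · exact (contractMap_target S e hst).trans (contractMap_source S e hst).symm
    · exact (contractMap_source S e hst).trans (contractMap_target S e hst).symm
  · exact Or.inl ⟨⟨e', he'⟩, b, contractGraph_endp S e hst e' he' b,
      contractGraph_endp S e hst e' he' !b⟩

theorem PreGraph.Reach.contractMap {x y : S.V} (h : S.Reach x y) :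
    (contractGraph S e hst).Reach (contractMap S e hst x) (contractMap S e hst y) := by
  induction h with
  | refl => exact Relation.ReflTransGen.refl
  | tail _ hadj ih =>
    rcases contractMap_adj_or_eq S e hst hadj with hadj' | heq
    · exact ih.tail hadj'
    · exact heq ▸ ih

end Contraction

section Surgery

variable (G : PreGraph) (h₁ h₂ : G.E × Bool)

theorem surg_endp_fst_true : (surg G h₁ h₂).endp (h₁.1, true) = G.endp h₁ := by
  simp [surg]

theorem surg_endp_fst_false :
    (surg G h₁ h₂).endp (h₁.1, false) = G.endp (h₂.1, !h₂.2) := by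
  simp [surg]

variable {G h₁ h₂}

theorem surg_endp_snd_true (hne : h₁.1 ≠ h₂.1) :
    (surg G h₁ h₂).endp (h₂.1, true) = G.endp h₂ := by
  simp [surg, Ne.symm hne]

theorem surg_endp_snd_false (hne : h₁.1 ≠ h₂.1) :
    (surg G h₁ h₂).endp (h₂.1, false) = G.endp (h₁.1, !h₁.2) := by
  simp [surg, Ne.symm hne]

theorem surg_endp_of_ne {e : G.E} (he₁ : e ≠ h₁.1) (he₂ : e ≠ h₂.1) (b : Bool) :
    (surg G h₁ h₂).endp (e, b) = G.endp (e, b) := by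
  simp [surg, he₁, he₂]

/-- Close the path with `e₂ : v(h₂) → v(h̄₁)`, resp. `e₁ : v(h₁) → v(h̄₂)`. -/
theorem surg_reach_of_reach_ends (hne : h₁.1 ≠ h₂.1)
    (h : (surg G h₁ h₂).Reach (G.endp h₁) (G.endp (h₁.1, !h₁.2)) ∨
      (surg G h₁ h₂).Reach (G.endp h₂) (G.endp (h₂.1, !h₂.2))) :
    (surg G h₁ h₂).Reach (G.endp h₁) (G.endp h₂) := by
  rcases h with h | h
  · exact h.tail ⟨h₂.1, false, surg_endp_snd_false hne, surg_endp_snd_true hne⟩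
  · exact Relation.ReflTransGen.head
      ⟨h₁.1, true, surg_endp_fst_true G h₁ h₂, surg_endp_fst_false G h₁ h₂⟩ h.symm

/-- The surgery leaves the edges of `X e.1` other than `e` untouched. -/
theorem surg_nProd_reach_ends {n : ℕ} {X : Fin n → PreGraph} {h₁ h₂ : (nProd X).E × Bool}
    (e : (nProd X).E) (he₁ : h₁.1 = e ∨ h₁.1.1 ≠ e.1) (he₂ : h₂.1 = e ∨ h₂.1.1 ≠ e.1)
    (hconn : (deleteEdge (X e.1) e.2).IsConnected) (b : Bool) :
    (surg (nProd X) h₁ h₂).Reach ((nProd X).endp (e, b)) ((nProd X).endp (e, !b)) := by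
  obtain ⟨i, f₀⟩ := e
  have hkept : ∀ f : (X i).E, f ≠ f₀ → ∀ b' : Bool,
      (surg (nProd X) h₁ h₂).endp (⟨i, f⟩, b') = ⟨i, (X i).endp (f, b')⟩ := by
    intro f hf b'
    have hf' : (⟨i, f⟩ : (nProd X).E) ≠ ⟨i, f₀⟩ := fun heq => hf (eq_of_heq (Sigma.mk.inj heq).2)
    refine surg_endp_of_ne ?_ ?_ b'
    · intro heq
      exact he₁.elim (hf' ∘ heq.trans) (· (congrArg Sigma.fst heq).symm)
    · intro heq
      exact he₂.elim (hf' ∘ heq.trans) (· (congrArg Sigma.fst heq).symm)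
  refine Relation.ReflTransGen.lift (Sigma.mk i) ?_ _ _ (hconn.2 _ _)
  rintro _ _ ⟨⟨f, hf⟩, b', rfl, rfl⟩
  exact ⟨⟨i, f⟩, b', hkept f hf b', hkept f hf !b'⟩

end Surgery

theorem xhhDecomp_eq_zero_of_reach (k : Type*) [Field k] [CharZero k] {a : ℕ} (ha : 2 ≤ a)
    {G : PreGraph} {h₁ h₂ : G.E × Bool}
    (h : (surg G h₁ h₂).Reach (G.endp h₁) (G.endp h₂)) :
    xhhDecomp k a G h₁ h₂ = 0 := by
  unfold xhhDecomp
  split_ifs with hc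
  · refine (congrArg _ (decompSum_eq_zero_of_reach k ha _ ?_)).trans (smul_zero _)
    rw [← surg_endp_fst_true G h₁ h₂, ← surg_endp_snd_true hc.1] at h
    have h' := PreGraph.Reach.contractMap (surg G h₁ h₂) h₁.1 hc.2.2.2 h
    rwa [contractMap_source (surg G h₁ h₂) h₁.1 hc.2.2.2] at h'
  · rfl

theorem Acore_eq_zero_of_Is1PI (k : Type*) [Field k] [CharZero k] {a : ℕ} (ha : 2 ≤ a)
    (X : Fin 2 → GraphObj) (hX : Is1PI (X 0).1 ∨ Is1PI (X 1).1) :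
    Acore k a X = 0 := by
  refine Finset.sum_eq_zero fun h₁ _ => Finset.sum_eq_zero fun h₂ _ => ?_
  split_ifs with hcover
  · have hfac : h₁.1.1 ≠ h₂.1.1 := by
      intro heq
      have h0 := hcover 0
      have h1 := hcover 1
      rw [heq, or_self] at h0 h1
      exact absurd (h0.symm.trans h1) (by decide)
    refine xhhDecomp_eq_zero_of_reach k ha
      (surg_reach_of_reach_ends (fun heq => hfac (congrArg Sigma.fst heq)) ?_)
    obtain ⟨i, hi⟩ : ∃ i, Is1PI (X i).1 := hX.elim (⟨0, ·⟩) (⟨1, ·⟩)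
    rcases hcover i with rfl | rfl
    · exact Or.inl (surg_nProd_reach_ends h₁.1 (Or.inl rfl) (Or.inr (Ne.symm hfac)) (hi.2 _) _)
    · exact Or.inr (surg_nProd_reach_ends h₂.1 (Or.inr hfac) (Or.inl rfl) (hi.2 _) _)
  · rfl

/-- If `X₁` or `X₂` is a one-particle irreducible graph, then
`α_{2,2}(X₁ ⊗ X₂) = 0`. -/
theorem alpha22_vanishes_on_1PI
    (k : Type*) [Field k] [CharZero k] (X₁ X₂ : GraphObj)
    (h : Is1PI X₁.1 ∨ Is1PI X₂.1) :
    q2 k (Afull k 2 2 (Finsupp.single ![X₁, X₂] 1)) = 0 := by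
  rw [Afull, if_pos ⟨le_rfl, le_rfl⟩, Finsupp.lift_apply, Finsupp.sum_single_index (by simp),
    one_smul, Acore_eq_zero_of_Is1PI k le_rfl _ h, map_zero]

end GraphComplex
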